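/- arXiv:2103.02430 — 2 statements merged into one kernel-verified Lean document; each statement's English description precedes it below -/
import Mathlib

section
/- Let H and G be convex processes on ℝ^n with graph H ⊆ graph G. If dom H + R_-(H) = ℝ^n and R_+(H) = im H + N_-(H) = ℝ^n, then also dom G + R_-(G) = ℝ^n and R_+(G) = im G + N_-(G) = ℝ^n. In particular, graph L_-(H) ⊆ graph L_-(G) and graph L_+(H) ⊆ graph L_+(G). -/
open Matrix Set Pointwise

/-- A set-valued map from `ℝ^n` to subsets of `ℝ^n`. -/
abbrev SVMap (n : ℕ) := (Fin n → ℝ) → Set (Fin n → ℝ)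

/-- The graph of a set-valued map. -/
def graphOf {n : ℕ} (H : SVMap n) : Set ((Fin n → ℝ) × (Fin n → ℝ)) :=
  {p | p.2 ∈ H p.1}

/-- The set-valued map associated with a graph. -/
def ofGraph {n : ℕ} (G : Set ((Fin n → ℝ) × (Fin n → ℝ))) : SVMap n :=
  fun x => {y | (x, y) ∈ G}

/-- A convex cone: a nonempty convex set closed under nonnegative scalar multiplication. -/
def IsConvexCone {V : Type*} [AddCommGroup V] [Module ℝ V] (C : Set V) : Prop :=
  C.Nonempty ∧ Convex ℝ C ∧ ∀ c : ℝ, 0 ≤ c → ∀ x ∈ C, c • x ∈ C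

/-- A convex process: a set-valued map whose graph is a convex cone. -/
def IsConvexProcess {n : ℕ} (H : SVMap n) : Prop :=
  IsConvexCone (graphOf H)

/-- A linear process: a set-valued map whose graph is a linear subspace. -/
def IsLinearProcess {n : ℕ} (H : SVMap n) : Prop :=
  ∃ S : Submodule ℝ ((Fin n → ℝ) × (Fin n → ℝ)), graphOf H = (S : Set _)

/-- The domain of a set-valued map. -/
def domOf {n : ℕ} (H : SVMap n) : Set (Fin n → ℝ) := {x | (H x).Nonempty}

/-- The image of a set-valued map. -/
def imOf {n : ℕ} (H : SVMap n) : Set (Fin n → ℝ) := {y | ∃ x, y ∈ H x}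

/-- The reachable set: states reachable from the origin by a finite trajectory. -/
def reachSet {n : ℕ} (H : SVMap n) : Set (Fin n → ℝ) :=
  {ξ | ∃ (q : ℕ) (x : ℕ → (Fin n → ℝ)),
    x 0 = 0 ∧ x q = ξ ∧ ∀ k, k < q → x (k + 1) ∈ H (x k)}

/-- The null-controllable set: states steered to the origin by a finite trajectory. -/
def nullSet {n : ℕ} (H : SVMap n) : Set (Fin n → ℝ) :=
  {ξ | ∃ (q : ℕ) (x : ℕ → (Fin n → ℝ)),
    x 0 = ξ ∧ x q = 0 ∧ ∀ k, k < q → x (k + 1) ∈ H (x k)}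

/-- The feasible set: states from which an infinite trajectory emanates. -/
def feasSet {n : ℕ} (H : SVMap n) : Set (Fin n → ℝ) :=
  {ξ | ∃ x : ℕ → (Fin n → ℝ), x 0 = ξ ∧ ∀ k, x (k + 1) ∈ H (x k)}

/-- `H` is reachable if every feasible state is reachable. -/
def IsReachable {n : ℕ} (H : SVMap n) : Prop := feasSet H ⊆ reachSet H

/-- `H` is null-controllable if every feasible state is null-controllable. -/
def IsNullControllable {n : ℕ} (H : SVMap n) : Prop := feasSet H ⊆ nullSet H

/-- The minimal linear process `L_-` associated with `H`: graph `L_- = lin(graph H) = (-graph H) ∩ graph H`. -/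
def Lminus {n : ℕ} (H : SVMap n) : SVMap n := ofGraph ((-(graphOf H)) ∩ graphOf H)

/-- The maximal linear process `L_+` associated with `H`: graph `L_+ = Lin(graph H) = graph H - graph H`. -/
def Lplus {n : ℕ} (H : SVMap n) : SVMap n := ofGraph (graphOf H - graphOf H)

/-- The negative dual process: `p ∈ H^-(q)` iff `⟨p,x⟩ ≥ ⟨q,y⟩` for all `(x,y) ∈ graph H`. -/
def dualNeg {n : ℕ} (H : SVMap n) : SVMap n :=
  fun q => {p | ∀ x y, y ∈ H x → q ⬝ᵥ y ≤ p ⬝ᵥ x}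

/-- The positive dual process: `p ∈ H^+(q)` iff `⟨p,x⟩ ≤ ⟨q,y⟩` for all `(x,y) ∈ graph H`. -/
def dualPos {n : ℕ} (H : SVMap n) : SVMap n :=
  fun q => {p | ∀ x y, y ∈ H x → p ⬝ᵥ x ≤ q ⬝ᵥ y}

/-- `(lam, ξ)` is an eigenpair of `G` if `ξ ≠ 0` and `lam • ξ ∈ G(ξ)`. -/
def IsEigenpair {n : ℕ} (G : SVMap n) (lam : ℝ) (ξ : Fin n → ℝ) : Prop :=
  ξ ≠ 0 ∧ lam • ξ ∈ G ξ

/-- The conic hull: all conic (nonnegative) combinations of elements of `S`. -/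
def coneHull {V : Type*} [AddCommGroup V] [Module ℝ V] (S : Set V) : Set V :=
  {x | ∃ (k : ℕ) (c : Fin k → ℝ) (f : Fin k → V),
    (∀ i, 0 ≤ c i) ∧ (∀ i, f i ∈ S) ∧ x = ∑ i, c i • f i}

/-- The most powerful unfalsified process `H_D`: the convex process with graph `cone D`. -/
def mpup {n : ℕ} (D : Set ((Fin n → ℝ) × (Fin n → ℝ))) : SVMap n := ofGraph (coneHull D)

/-- The inner product on `ℝ^n × ℝ^n`. -/
def pairDot {n : ℕ} (p q : (Fin n → ℝ) × (Fin n → ℝ)) : ℝ := p.1 ⬝ᵥ q.1 + p.2 ⬝ᵥ q.2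

/-- The positive polar cone of a subset of `ℝ^n × ℝ^n`. -/
def polarPos {n : ℕ} (C : Set ((Fin n → ℝ) × (Fin n → ℝ))) :
    Set ((Fin n → ℝ) × (Fin n → ℝ)) :=
  {η | ∀ d ∈ C, 0 ≤ pairDot d η}

/-- The negative polar cone of a subset of `ℝ^n × ℝ^n`. -/
def polarNeg {n : ℕ} (C : Set ((Fin n → ℝ) × (Fin n → ℝ))) :
    Set ((Fin n → ℝ) × (Fin n → ℝ)) :=
  {η | ∀ d ∈ C, pairDot d η ≤ 0}

/-- The data set `D = {(x_t, y_t)}` whose elements are the column pairs of `X` and `Y`. -/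
def colPairs {n T : ℕ} (X Y : Matrix (Fin n) (Fin T) ℝ) :
    Set ((Fin n → ℝ) × (Fin n → ℝ)) :=
  {p | ∃ t : Fin T, p = (fun i => X i t, fun i => Y i t)}

/-- The rows of the matrix `[Z −W]`, viewed as pairs `(z_i, -w_i)` in `ℝ^n × ℝ^n`. -/
def rowPairsZW {m n : ℕ} (Z W : Matrix (Fin m) (Fin n) ℝ) :
    Set ((Fin n → ℝ) × (Fin n → ℝ)) :=
  {p | ∃ i : Fin m, p = (fun j => Z i j, fun j => -W i j)}

/-- `X ℝ_+^T`: the image of the nonnegative orthant under `X`. -/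
def posImage {n T : ℕ} (X : Matrix (Fin n) (Fin T) ℝ) : Set (Fin n → ℝ) :=
  {x | ∃ v : Fin T → ℝ, (∀ t, 0 ≤ v t) ∧ x = X *ᵥ v}

/-- The set-valued map `S ↦ W^{-1}(Z S)`. -/
def mapWiZ {m n : ℕ} (Z W : Matrix (Fin m) (Fin n) ℝ) :
    Set (Fin n → ℝ) → Set (Fin n → ℝ) :=
  fun S => {y | ∃ x ∈ S, W *ᵥ y = Z *ᵥ x}

/-- The set-valued map `S ↦ Z^{-1}(W S)`. -/
def mapZiW {m n : ℕ} (Z W : Matrix (Fin m) (Fin n) ℝ) :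
    Set (Fin n → ℝ) → Set (Fin n → ℝ) :=
  fun S => {y | ∃ x ∈ S, Z *ᵥ y = W *ᵥ x}

/-- The set-valued map `S ↦ Y(X^{-1} S)`. -/
def mapYXi {n T : ℕ} (X Y : Matrix (Fin n) (Fin T) ℝ) :
    Set (Fin n → ℝ) → Set (Fin n → ℝ) :=
  fun S => {y | ∃ v : Fin T → ℝ, X *ᵥ v ∈ S ∧ y = Y *ᵥ v}

/-- The set-valued map `S ↦ X(Y^{-1} S)`. -/
def mapXYi {n T : ℕ} (X Y : Matrix (Fin n) (Fin T) ℝ) :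
    Set (Fin n → ℝ) → Set (Fin n → ℝ) :=
  fun S => {y | ∃ v : Fin T → ℝ, Y *ᵥ v ∈ S ∧ y = X *ᵥ v}

/-- The image of a set under a set-valued map. -/
def imageSV {n : ℕ} (H : SVMap n) (S : Set (Fin n → ℝ)) : Set (Fin n → ℝ) :=
  {y | ∃ x ∈ S, y ∈ H x}

/-- The inverse of a set-valued map. -/
def invSV {n : ℕ} (H : SVMap n) : SVMap n := fun y => {x | y ∈ H x}

/-- The linear map `(a, b) ↦ (b, -a)` on `ℝ^n × ℝ^n`. -/
def flipMap {n : ℕ} : ((Fin n → ℝ) × (Fin n → ℝ)) → ((Fin n → ℝ) × (Fin n → ℝ)) :=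
  fun p => (p.2, -p.1)

/-- The orthogonal complement of a subset of `ℝ^n × ℝ^n`. -/
def orthPair {n : ℕ} (C : Set ((Fin n → ℝ) × (Fin n → ℝ))) :
    Set ((Fin n → ℝ) × (Fin n → ℝ)) :=
  {q | ∀ p ∈ C, pairDot p q = 0}

/-- The dual linear process `L^⊥`, with graph `{(b, -a) : (a, b) ∈ (graph L)^⊥}`. -/
def perpProcess {n : ℕ} (L : SVMap n) : SVMap n :=
  ofGraph (flipMap '' orthPair (graphOf L))

/-- The orthogonal complement of a subset of `ℝ^n`. -/
def orthVec {n : ℕ} (S : Set (Fin n → ℝ)) : Set (Fin n → ℝ) :=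
  {x | ∀ y ∈ S, x ⬝ᵥ y = 0}

/-! Every set in the standing assumptions is monotone under inclusion of graphs, and a set
containing `ℝ^n` is `ℝ^n`. -/

section GraphMonotone

variable {n : ℕ} {H G : SVMap n}

lemma mem_of_graphOf_subset (h : graphOf H ⊆ graphOf G) {x y : Fin n → ℝ} (hy : y ∈ H x) :
    y ∈ G x :=
  h (show (x, y) ∈ graphOf H from hy)

lemma domOf_mono (h : graphOf H ⊆ graphOf G) : domOf H ⊆ domOf G :=
  fun _ ⟨y, hy⟩ => ⟨y, mem_of_graphOf_subset h hy⟩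

lemma imOf_mono (h : graphOf H ⊆ graphOf G) : imOf H ⊆ imOf G :=
  fun _ ⟨x, hy⟩ => ⟨x, mem_of_graphOf_subset h hy⟩

lemma reachSet_mono (h : graphOf H ⊆ graphOf G) : reachSet H ⊆ reachSet G := by
  rintro ξ ⟨q, x, h0, hq, hstep⟩
  exact ⟨q, x, h0, hq, fun k hk => mem_of_graphOf_subset h (hstep k hk)⟩

lemma nullSet_mono (h : graphOf H ⊆ graphOf G) : nullSet H ⊆ nullSet G := by
  rintro ξ ⟨q, x, h0, hq, hstep⟩
  exact ⟨q, x, h0, hq, fun k hk => mem_of_graphOf_subset h (hstep k hk)⟩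

lemma graphOf_Lminus_mono (h : graphOf H ⊆ graphOf G) :
    graphOf (Lminus H) ⊆ graphOf (Lminus G) :=
  Set.inter_subset_inter (Set.neg_subset_neg.mpr h) h

lemma graphOf_Lplus_mono (h : graphOf H ⊆ graphOf G) :
    graphOf (Lplus H) ⊆ graphOf (Lplus G) :=
  Set.sub_subset_sub h h

end GraphMonotone

theorem stmt7_general {n : ℕ} (H G : SVMap n)
    (hsub : graphOf H ⊆ graphOf G)
    (h1 : domOf H + reachSet (Lminus H) = Set.univ)
    (h2 : reachSet (Lplus H) = Set.univ)
    (h3 : imOf H + nullSet (Lminus H) = Set.univ) :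
    (domOf G + reachSet (Lminus G) = Set.univ ∧
      reachSet (Lplus G) = Set.univ ∧
      imOf G + nullSet (Lminus G) = Set.univ) ∧
    graphOf (Lminus H) ⊆ graphOf (Lminus G) ∧
    graphOf (Lplus H) ⊆ graphOf (Lplus G) := by
  have hLminus := graphOf_Lminus_mono hsub
  have hLplus := graphOf_Lplus_mono hsub
  refine ⟨⟨?_, ?_, ?_⟩, hLminus, hLplus⟩
  · exact Set.eq_univ_of_univ_subset <|
      h1 ▸ Set.add_subset_add (domOf_mono hsub) (reachSet_mono hLminus)
  · exact Set.eq_univ_of_univ_subset <| h2 ▸ reachSet_mono hLplus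
  · exact Set.eq_univ_of_univ_subset <|
      h3 ▸ Set.add_subset_add (imOf_mono hsub) (nullSet_mono hLminus)

/-- The standing assumptions for null-controllability are inherited under graph inclusion;
in particular the minimal and maximal linear processes satisfy the same inclusion. -/
theorem stmt7 {n : ℕ} (H G : SVMap n) (hH : IsConvexProcess H) (hG : IsConvexProcess G)
    (hsub : graphOf H ⊆ graphOf G)
    (h1 : domOf H + reachSet (Lminus H) = Set.univ)
    (h2 : reachSet (Lplus H) = Set.univ)
    (h3 : imOf H + nullSet (Lminus H) = Set.univ) :
    (domOf G + reachSet (Lminus G) = Set.univ ∧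
      reachSet (Lplus G) = Set.univ ∧
      imOf G + nullSet (Lminus G) = Set.univ) ∧
    graphOf (Lminus H) ⊆ graphOf (Lminus G) ∧
    graphOf (Lplus H) ⊆ graphOf (Lplus G) :=
  stmt7_general H G hsub h1 h2 h3
end

section
/- Let D = {(x_t,y_t) : t = 1,…,T} ⊆ ℝ^n × ℝ^n be a finite set with associated matrices X, Y ∈ ℝ^{n×T} and Z, W ∈ ℝ^{ℓ×n}. Then for every set S ⊆ ℝ^n, the images of S under the minimal and maximal linear processes associated with H_D satisfy L_-(H_D)(S) = W^{-1}(ZS) = {y : ∃x ∈ S with Wy = Zx} and L_+(H_D)(S) = Y(X^{-1}S) = {Yv : v ∈ ℝ^T, Xv ∈ S}. -/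
open Matrix Set Pointwise

/-!
The graph of `H_D` is `cone D = A(ℝ₊^T)` for the linear map `A v = (X v, Y v)`, and since every
`v` is `v⁺ - v⁻`, its linear span `cone D - cone D` is the whole range of `A`; this gives `L_+`.
For `L_-`, the rows `(z_i, -w_i)` lie in `D^+`, so a point `(x, y)` of `cone D ∩ -cone D` pairs
to zero with each of them, which says `W y = Z x`. Conversely, such a point pairs to zero with all
of `D^+ = cone(rows)`, and the bipolar theorem `D^{++} = cone D` puts both `(x, y)` and `-(x, y)`
into `cone D`. The bipolar theorem is Farkas' lemma; its one nontrivial input is that `A(ℝ₊^T)`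
is closed, which follows from the conic Carathéodory theorem.
-/

open Function

section ConicCaratheodory

variable {ι E : Type*} [Fintype ι] [AddCommGroup E] [Module ℝ E]

/-- Moving from `v` along the kernel direction `-u` until the first coordinate vanishes. -/
lemma exists_nonneg_map_eq_support_ssubset (A : (ι → ℝ) →ₗ[ℝ] E) {v u : ι → ℝ} (hv : 0 ≤ v)
    (hu : A u = 0) (hpos : ∃ i, 0 < u i) (hsupp : support u ⊆ support v) :
    ∃ w, 0 ≤ w ∧ A w = A v ∧ support w ⊂ support v := by
  obtain ⟨i₀, hi₀, hmin⟩ := Finset.exists_min_image (Finset.univ.filter (0 < u ·))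
    (fun i => v i / u i) (by simpa [Finset.Nonempty] using hpos)
  simp only [Finset.mem_filter, Finset.mem_univ, true_and] at hi₀ hmin
  set t := v i₀ / u i₀
  have ht : 0 ≤ t := div_nonneg (hv i₀) hi₀.le
  refine ⟨v - t • u, fun i => ?_, by simp [hu], ?_⟩
  · have hvi : 0 ≤ v i := hv i
    simp only [Pi.zero_apply, Pi.sub_apply, Pi.smul_apply, smul_eq_mul, sub_nonneg]
    rcases lt_or_ge 0 (u i) with hui | hui
    · exact (le_div_iff₀ hui).1 (hmin i hui)
    · exact (mul_nonpos_of_nonneg_of_nonpos ht hui).trans hvi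
  · refine ssubset_of_subset_not_subset (fun i hi => ?_) fun h => ?_
    · by_contra hvi
      have hui : u i = 0 := notMem_support.1 fun h => hvi (hsupp h)
      simp_all
    · exact h (hsupp hi₀.ne') (by simp [t, div_mul_cancel₀ _ hi₀.ne'])

theorem exists_nonneg_map_eq_ker_trivial_on_support (A : (ι → ℝ) →ₗ[ℝ] E) {v : ι → ℝ}
    (hv : 0 ≤ v) :
    ∃ w, 0 ≤ w ∧ A w = A v ∧ ∀ u, A u = 0 → support u ⊆ support w → u = 0 := by
  obtain ⟨w, ⟨hw, hwv⟩, hmin⟩ := (measure fun w : ι → ℝ => (support w).ncard).wf.has_min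
    {w | 0 ≤ w ∧ A w = A v} ⟨v, hv, rfl⟩
  refine ⟨w, hw, hwv, fun u hu hsupp => by_contra fun hu0 => ?_⟩
  obtain ⟨u', hu', hpos, hsupp'⟩ : ∃ u', A u' = 0 ∧ (∃ i, 0 < u' i) ∧ support u' ⊆ support w := by
    obtain ⟨i, hi⟩ := Function.ne_iff.1 hu0
    rcases hi.lt_or_gt with hneg | hpos
    · exact ⟨-u, by simp [hu], ⟨i, by simpa using hneg⟩, by simpa using hsupp⟩
    · exact ⟨u, hu, ⟨i, hpos⟩, hsupp⟩
  obtain ⟨w', hw', hw'v, hss⟩ := exists_nonneg_map_eq_support_ssubset A hw hu' hpos hsupp'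
  exact hmin w' ⟨hw', hw'v.trans hwv⟩ (Set.ncard_lt_ncard hss (Set.toFinite _))

end ConicCaratheodory

section Farkas

variable {ι E : Type*} [Fintype ι] [AddCommGroup E] [TopologicalSpace E]
  [IsTopologicalAddGroup E] [Module ℝ E] [ContinuousSMul ℝ E] [T2Space E]

/-- The image of the nonnegative orthant is the finite union of the images of the faces
`{c : s → ℝ | 0 ≤ c}` on which `A` is injective; each of these is closed. -/
theorem isClosed_image_nonneg (A : (ι → ℝ) →ₗ[ℝ] E) :
    IsClosed (A '' {v | 0 ≤ v}) := by
  let B (s : Set ι) : (s → ℝ) →ₗ[ℝ] E := A ∘ₗ ExtendByZero.linearMap ℝ Subtype.val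
  have hunion : A '' {v | 0 ≤ v} = ⋃ (s : Set ι) (_ : Injective (B s)), B s '' {c | 0 ≤ c} := by
    ext x
    simp only [Set.mem_image, Set.mem_iUnion, Set.mem_ofPred_eq]
    constructor
    · rintro ⟨v, hv, rfl⟩
      obtain ⟨w, hw, hwv, hker⟩ := exists_nonneg_map_eq_ker_trivial_on_support A hv
      have hextend : extend Subtype.val (fun i : support w => w i) 0 = w := by
        funext i
        by_cases hi : i ∈ support w
        · exact extend_val_apply hi
        · rw [extend_val_apply' hi, Pi.zero_apply, notMem_support.1 hi]
      refine ⟨support w, ?_, fun i => w i, fun i => hw i,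
        (congrArg A hextend).trans hwv⟩
      rw [← LinearMap.ker_eq_bot, LinearMap.ker_eq_bot']
      intro c hc
      have hzero := hker _ hc fun i hi => by_contra fun his => hi (extend_val_apply' his)
      funext i
      simpa [extend_val_apply i.2] using congrFun hzero i
    · rintro ⟨s, -, c, hc, rfl⟩
      refine ⟨_, fun i => ?_, rfl⟩
      by_cases hi : i ∈ s
      · simpa [extend_val_apply hi] using hc ⟨i, hi⟩
      · simp [extend_val_apply' hi]
  rw [hunion]
  refine isClosed_iUnion_of_finite fun s => isClosed_iUnion_of_finite fun hs => ?_
  exact (LinearMap.isClosedEmbedding_of_injective (LinearMap.ker_eq_bot.2 hs)).isClosedMap _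
    (isClosed_le continuous_const continuous_id)

theorem mem_image_nonneg_of_forall_dual [DecidableEq ι] [LocallyConvexSpace ℝ E]
    (A : (ι → ℝ) →ₗ[ℝ] E) {b : E}
    (h : ∀ f : StrongDual ℝ E, (∀ i, 0 ≤ f (A (Pi.single i 1))) → 0 ≤ f b) :
    b ∈ A '' {v | 0 ≤ v} := by
  by_contra hb
  let C : ProperCone ℝ E := ⟨(PointedCone.positive ℝ (ι → ℝ)).map A, isClosed_image_nonneg A⟩
  obtain ⟨f, hfC, hfb⟩ := C.hyperplane_separation_point hb
  exact hfb.not_ge (h f fun i => hfC _ ⟨Pi.single i 1, Pi.single_nonneg.2 zero_le_one, rfl⟩)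

end Farkas

section ConeHull

variable {V : Type*} [AddCommGroup V] [Module ℝ V]

theorem coneHull_range_single {k : ℕ} (A : (Fin k → ℝ) →ₗ[ℝ] V) :
    coneHull (range fun i => A (Pi.single i 1)) = A '' {v | 0 ≤ v} := by
  ext x
  constructor
  · rintro ⟨j, c, f, hc, hf, rfl⟩
    choose σ hσ using hf
    refine ⟨∑ l, c l • Pi.single (σ l) 1, ?_, ?_⟩
    · exact Finset.sum_nonneg fun l _ =>
        smul_nonneg (hc l) (Pi.single_nonneg.2 zero_le_one : (0 : Fin k → ℝ) ≤ _)
    · simp [map_sum, hσ]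
  · rintro ⟨v, hv, rfl⟩
    refine ⟨k, v, fun i => A (Pi.single i 1), hv, fun i => ⟨i, rfl⟩, ?_⟩
    conv_lhs => rw [← Finset.univ_sum_single v]
    rw [map_sum]
    refine Finset.sum_congr rfl fun i _ => ?_
    rw [← map_smul, ← Pi.single_smul, smul_eq_mul, mul_one]

theorem subset_coneHull (S : Set V) : S ⊆ coneHull S := fun x hx =>
  ⟨1, fun _ => 1, fun _ => x, fun _ => zero_le_one, fun _ => hx, by simp⟩

theorem forall_mem_coneHull_nonneg (φ : V →ₗ[ℝ] ℝ) {S : Set V} (h : ∀ x ∈ S, 0 ≤ φ x) :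
    ∀ x ∈ coneHull S, 0 ≤ φ x := by
  rintro _ ⟨k, c, f, hc, hf, rfl⟩
  simpa using Finset.sum_nonneg fun i _ => mul_nonneg (hc i) (h _ (hf i))

theorem forall_mem_coneHull_eq_zero (φ : V →ₗ[ℝ] ℝ) {S : Set V} (h : ∀ x ∈ S, φ x = 0) :
    ∀ x ∈ coneHull S, φ x = 0 := fun x hx =>
  le_antisymm (by simpa using forall_mem_coneHull_nonneg (-φ) (by simp +contextual [h]) x hx)
    (forall_mem_coneHull_nonneg φ (by simp +contextual [h]) x hx)

variable {ι : Type*}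

theorem image_nonneg_sub_image_nonneg (A : (ι → ℝ) →ₗ[ℝ] V) :
    A '' {v | 0 ≤ v} - A '' {v | 0 ≤ v} = range A := by
  ext x
  constructor
  · rintro ⟨_, ⟨v, -, rfl⟩, _, ⟨w, -, rfl⟩, rfl⟩
    exact ⟨v - w, map_sub A v w⟩
  · rintro ⟨v, rfl⟩
    exact ⟨_, ⟨v⁺, posPart_nonneg v, rfl⟩, _, ⟨v⁻, negPart_nonneg v, rfl⟩,
      (map_sub A _ _).symm.trans (congrArg A (posPart_sub_negPart v))⟩

end ConeHull

section DataCone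

variable {n : ℕ}

def pairDotBilin : ((Fin n → ℝ) × (Fin n → ℝ)) →ₗ[ℝ] ((Fin n → ℝ) × (Fin n → ℝ)) →ₗ[ℝ] ℝ :=
  LinearMap.mk₂ ℝ pairDot
    (fun _ _ _ => by simp only [pairDot, Prod.fst_add, Prod.snd_add, add_dotProduct]; ring)
    (fun _ _ _ => by
      simp only [pairDot, Prod.smul_fst, Prod.smul_snd, smul_dotProduct, smul_eq_mul]; ring)
    (fun _ _ _ => by simp only [pairDot, Prod.fst_add, Prod.snd_add, dotProduct_add]; ring)
    (fun _ _ _ => by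
      simp only [pairDot, Prod.smul_fst, Prod.smul_snd, dotProduct_smul, smul_eq_mul]; ring)

theorem exists_pairDot_eq (f : ((Fin n → ℝ) × (Fin n → ℝ)) →ₗ[ℝ] ℝ) :
    ∃ η, ∀ p, f p = pairDot p η := by
  have hdual (g : Module.Dual ℝ (Fin n → ℝ)) (v) :
      g v = v ⬝ᵥ (dotProductEquiv ℝ (Fin n)).symm g := by
    conv_lhs => rw [← (dotProductEquiv ℝ (Fin n)).apply_symm_apply g]
    simp only [dotProductEquiv_apply_apply]
    exact dotProduct_comm _ _
  refine ⟨((dotProductEquiv ℝ _).symm (f ∘ₗ LinearMap.inl ℝ _ _),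
    (dotProductEquiv ℝ _).symm (f ∘ₗ LinearMap.inr ℝ _ _)), fun p => ?_⟩
  rw [pairDot, ← hdual, ← hdual, LinearMap.comp_apply, LinearMap.comp_apply, ← map_add,
    LinearMap.inl_apply, LinearMap.inr_apply, Prod.mk_add_mk, add_zero, zero_add]

variable {T m : ℕ}

theorem colPairs_eq_range (X Y : Matrix (Fin n) (Fin T) ℝ) :
    colPairs X Y = range fun t => (X.mulVecLin.prod Y.mulVecLin) (Pi.single t 1) := by
  ext p
  simp only [colPairs, mem_ofPred_eq, LinearMap.prod_apply, Function.prod_apply,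
    mulVecBilin_apply, mulVec_single, MulOpposite.op_one, one_smul, mem_range, eq_comm]
  rfl

theorem coneHull_colPairs (X Y : Matrix (Fin n) (Fin T) ℝ) :
    coneHull (colPairs X Y) = (X.mulVecLin.prod Y.mulVecLin) '' {v | 0 ≤ v} := by
  rw [colPairs_eq_range, coneHull_range_single]

theorem mem_coneHull_colPairs_of_forall_polarPos (X Y : Matrix (Fin n) (Fin T) ℝ)
    {p : (Fin n → ℝ) × (Fin n → ℝ)} (h : ∀ η ∈ polarPos (colPairs X Y), 0 ≤ pairDot p η) :
    p ∈ coneHull (colPairs X Y) := by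
  rw [coneHull_colPairs]
  refine mem_image_nonneg_of_forall_dual _ fun f hf => ?_
  obtain ⟨η, hη⟩ := exists_pairDot_eq (f : ((Fin n → ℝ) × (Fin n → ℝ)) →ₗ[ℝ] ℝ)
  simp only [ContinuousLinearMap.coe_coe] at hη
  rw [hη]
  refine h η ?_
  rw [colPairs_eq_range]
  rintro _ ⟨t, rfl⟩
  rw [← hη]
  exact hf t

theorem pairDot_rowPairsZW (Z W : Matrix (Fin m) (Fin n) ℝ) (x y : Fin n → ℝ) (i : Fin m) :
    pairDot (x, y) (fun j => Z i j, fun j => -W i j) = (Z *ᵥ x) i - (W *ᵥ y) i := by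
  have : (fun j => -W i j) = -fun j => W i j := rfl
  simp only [pairDot, Matrix.mulVec, this, neg_dotProduct, dotProduct_comm x, dotProduct_comm y,
    sub_eq_add_neg]

theorem pairDot_nonneg_of_mem_coneHull {D : Set ((Fin n → ℝ) × (Fin n → ℝ))}
    {p η : (Fin n → ℝ) × (Fin n → ℝ)} (hp : p ∈ coneHull D) (hη : η ∈ polarPos D) :
    0 ≤ pairDot p η :=
  forall_mem_coneHull_nonneg (pairDotBilin.flip η) hη p hp

theorem mem_neg_inter_coneHull_colPairs_iff (X Y : Matrix (Fin n) (Fin T) ℝ)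
    (Z W : Matrix (Fin m) (Fin n) ℝ)
    (hZW : polarPos (colPairs X Y) = coneHull (rowPairsZW Z W)) (x y : Fin n → ℝ) :
    (x, y) ∈ -coneHull (colPairs X Y) ∩ coneHull (colPairs X Y) ↔ W *ᵥ y = Z *ᵥ x := by
  have hneg (p η : (Fin n → ℝ) × (Fin n → ℝ)) : pairDot (-p) η = -pairDot p η :=
    LinearMap.map_neg₂ pairDotBilin p η
  constructor
  · rintro ⟨hmneg, hmem⟩
    funext i
    have hrow : (fun j => Z i j, fun j => -W i j) ∈ polarPos (colPairs X Y) :=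
      hZW ▸ subset_coneHull _ ⟨i, rfl⟩
    have hle := pairDot_nonneg_of_mem_coneHull hmem hrow
    have hge := pairDot_nonneg_of_mem_coneHull hmneg hrow
    rw [hneg, pairDot_rowPairsZW] at hge
    rw [pairDot_rowPairsZW] at hle
    linarith
  · intro h
    have horth : ∀ η ∈ polarPos (colPairs X Y), pairDot (x, y) η = 0 := by
      rw [hZW]
      refine forall_mem_coneHull_eq_zero (pairDotBilin (x, y)) ?_
      rintro _ ⟨i, rfl⟩
      exact (pairDot_rowPairsZW Z W x y i).trans (by rw [h, sub_self])
    refine ⟨mem_coneHull_colPairs_of_forall_polarPos X Y fun η hη => ?_,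
      mem_coneHull_colPairs_of_forall_polarPos X Y fun η hη => (horth η hη).ge⟩
    rw [hneg, horth η hη, neg_zero]

theorem mem_coneHull_sub_coneHull_colPairs_iff (X Y : Matrix (Fin n) (Fin T) ℝ)
    (x y : Fin n → ℝ) :
    (x, y) ∈ coneHull (colPairs X Y) - coneHull (colPairs X Y) ↔
      ∃ v, X *ᵥ v = x ∧ Y *ᵥ v = y := by
  rw [coneHull_colPairs, image_nonneg_sub_image_nonneg]
  simp [Prod.ext_iff]

end DataCone

/-- Images of a set under the minimal and maximal linear processes of `H_D`:
`L_-(H_D)(S) = W^{-1}(Z S)` and `L_+(H_D)(S) = Y(X^{-1} S)`. -/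
theorem stmt10 {n T m : ℕ} (X Y : Matrix (Fin n) (Fin T) ℝ) (Z W : Matrix (Fin m) (Fin n) ℝ)
    (hZW : polarPos (colPairs X Y) = coneHull (rowPairsZW Z W)) :
    ∀ S : Set (Fin n → ℝ),
      imageSV (Lminus (mpup (colPairs X Y))) S = mapWiZ Z W S ∧
      imageSV (Lplus (mpup (colPairs X Y))) S = mapYXi X Y S := by
  intro S
  constructor
  · ext y
    exact exists_congr fun x => and_congr_right fun _ =>
      mem_neg_inter_coneHull_colPairs_iff X Y Z W hZW x y
  · ext y
    constructor
    · rintro ⟨x, hx, hxy⟩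
      obtain ⟨v, rfl, rfl⟩ := (mem_coneHull_sub_coneHull_colPairs_iff X Y x y).1 hxy
      exact ⟨v, hx, rfl⟩
    · rintro ⟨v, hv, rfl⟩
      exact ⟨X *ᵥ v, hv, (mem_coneHull_sub_coneHull_colPairs_iff X Y _ _).2 ⟨v, rfl, rfl⟩⟩
end
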